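/- arXiv:0909.1112 — 3 statements merged into one kernel-verified Lean document; each statement's English description precedes it below -/
import Mathlib

section
/- For words u, v in x₁,…,xₙ with χ(u) = x^α and χ(v) = x^β, the constant term of d_{v⃖}·ψ(x^α) equals α!·δ_{α,β}, where ψ(x^α) = Σ_{π ∈ S_k} u∘π is the sum over all rearrangements of the letters of u, and α! = α₁!⋯αₙ!. -/
/-! The constant term of `d_{v⃖}·f` is the coefficient of `v` in `f`, and the coefficient of `v`
in `ψ(u)` counts the permutations `π` with `u ∘ π = v`. Such a permutation is the same as a
family of bijections, one for each letter `c`, from the positions of `c` in `v` to the positions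
of `c` in `u`. Hence the count is `∏_c (#c in u)!` when every letter occurs equally often in `u`
and `v`, and `0` otherwise. -/

open scoped BigOperators

/-- The free associative algebra `ℂ⟨x₁,…,xₙ⟩`, with monomial basis the words. -/
abbrev NCPoly (n : ℕ) := MonoidAlgebra ℂ (FreeMonoid (Fin n))

/-- Deletion of the prefix `u`: the operator `d_{u⃖}`. -/
noncomputable def Dop {n : ℕ} (u : FreeMonoid (Fin n)) (f : NCPoly n) : NCPoly n :=
  MonoidAlgebra.ofCoeff
    (Finsupp.comapDomain (fun w => u * w) f.coeff (fun _ _ _ _ h => mul_left_cancel h))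

/-- The word pairing `⟨f,P⟩ = Σ_w f_w P_w`. -/
noncomputable def wpair {n : ℕ} (f P : NCPoly n) : ℂ :=
  f.coeff.sum fun w c => c * P.coeff w

/-- `f` is homogeneous (all words in its support have the same length). -/
def IsHomog {n : ℕ} (f : NCPoly n) : Prop :=
  ∃ d : ℕ, ∀ w ∈ f.coeff.support, FreeMonoid.length w = d

/-- A two-sided ideal is homogeneous if it contains every homogeneous component
of each of its elements. -/
def IsHomogIdeal {n : ℕ} (I : TwoSidedIdeal (NCPoly n)) : Prop :=
  ∀ f ∈ I, ∀ d : ℕ,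
    MonoidAlgebra.ofCoeff
      (f.coeff.filter fun w : FreeMonoid (Fin n) => FreeMonoid.length w = d) ∈ I

/-- `ψ(x^α) = Σ_{π∈S_k} u∘π` : the sum over all position-permutations of the word `u`. -/
noncomputable def sympWord {n : ℕ} (u : List (Fin n)) : NCPoly n :=
  ∑ π : Equiv.Perm (Fin u.length),
    MonoidAlgebra.single (FreeMonoid.ofList (List.ofFn fun i => u.get (π i))) (1 : ℂ)

open scoped Nat

theorem Dop_coeff {n : ℕ} (u w : FreeMonoid (Fin n)) (f : NCPoly n) :
    (Dop u f).coeff w = f.coeff (u * w) :=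
  rfl

theorem sympWord_coeff {n : ℕ} (u v : List (Fin n)) :
    (sympWord u).coeff (FreeMonoid.ofList v) =
      Nat.card {π : Equiv.Perm (Fin u.length) // List.ofFn (fun i => u.get (π i)) = v} := by
  classical
  simp only [sympWord, MonoidAlgebra.coeff_sum, Finsupp.finsetSum_apply,
    MonoidAlgebra.coeff_single, Finsupp.single_apply, FreeMonoid.ofList.injective.eq_iff]
  rw [Finset.sum_boole, Nat.card_eq_fintype_card, Fintype.card_subtype]

def Equiv.subtypeCompEqEquivPi {α β γ : Type*} (f : α → γ) (g : β → γ) :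
    {e : α ≃ β // g ∘ e = f} ≃ ∀ c, {a // f a = c} ≃ {b // g b = c} where
  toFun e c := e.1.subtypeEquiv fun a => by rw [← congrFun e.2 a]; rfl
  invFun F := ⟨ofFiberEquiv F, funext (ofFiberEquiv_map F)⟩
  left_inv _ := rfl
  right_inv F := by
    funext c
    ext ⟨a, rfl⟩
    rfl

theorem Nat.card_equiv_eq_ite {α β : Type*} [Finite α] [Finite β] :
    Nat.card (α ≃ β) = if Nat.card α = Nat.card β then (Nat.card α)! else 0 := by
  split_ifs with h
  · obtain ⟨e⟩ := Finite.card_eq.mp h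
    rw [← Nat.card_perm, Nat.card_congr ((Equiv.refl α).equivCongr e.symm)]
  · have : IsEmpty (α ≃ β) := ⟨fun e => h (Nat.card_congr e)⟩
    exact Nat.card_of_isEmpty

theorem Nat.card_subtype_equiv_comp_eq {α β γ : Type*} [Finite α] [Finite β] [Fintype γ]
    (f : α → γ) (g : β → γ) :
    Nat.card {e : α ≃ β // g ∘ e = f} =
      ∏ c, if Nat.card {a // f a = c} = Nat.card {b // g b = c}
        then (Nat.card {a // f a = c})! else 0 := by
  rw [Nat.card_congr (Equiv.subtypeCompEqEquivPi f g), Nat.card_pi]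
  exact Finset.prod_congr rfl fun c _ => Nat.card_equiv_eq_ite

namespace List

variable {γ : Type*} [DecidableEq γ]

theorem card_get_eq (l : List γ) (c : γ) :
    Nat.card {i : Fin l.length // l.get i = c} = l.count c := by
  rw [Nat.card_eq_fintype_card, Fintype.card_subtype]
  exact Fin.card_filter_univ_eq_vector_get_eq_count c ⟨l, rfl⟩

theorem prod_ite_count_eq [Fintype γ] (u v : List γ) :
    (∏ c, if v.count c = u.count c then (v.count c)! else 0) =
      if (u : Multiset γ) = v then ∏ c, (u.count c)! else 0 := by
  simp only [Fintype.prod_ite_zero, Multiset.coe_eq_coe, perm_iff_count]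
  by_cases h : ∀ c, u.count c = v.count c
  · rw [if_pos fun c => (h c).symm, if_pos h]
    simp only [h]
  · rw [if_neg fun h' => h fun c => (h' c).symm, if_neg h]

def subtypePermOfFnEqEquiv (u v : List γ) (h : u.length = v.length) :
    {π : Equiv.Perm (Fin u.length) // ofFn (fun i => u.get (π i)) = v} ≃
      {e : Fin v.length ≃ Fin u.length // u.get ∘ e = v.get} :=
  ((finCongr h).equivCongr (Equiv.refl _)).subtypeEquiv fun π => by
    conv_lhs => rw [← ofFn_get v, ofFn_congr h, ofFn_inj]
    rfl

theorem card_perm_ofFn_get_eq [Fintype γ] (u v : List γ) :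
    Nat.card {π : Equiv.Perm (Fin u.length) // ofFn (fun i => u.get (π i)) = v} =
      if (u : Multiset γ) = v then ∏ c, (u.count c)! else 0 := by
  by_cases hlen : u.length = v.length
  · rw [Nat.card_congr (subtypePermOfFnEqEquiv u v hlen), Nat.card_subtype_equiv_comp_eq]
    simp only [card_get_eq]
    exact prod_ite_count_eq u v
  · have : IsEmpty {π : Equiv.Perm (Fin u.length) // ofFn (fun i => u.get (π i)) = v} :=
      ⟨fun π => hlen (by simpa using congrArg length π.2)⟩
    rw [Nat.card_of_isEmpty, if_neg fun h => hlen (Multiset.coe_eq_coe.mp h).length_eq]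

end List

/-- For words `u, v` with `χ(u) = x^α` and `χ(v) = x^β`,
`[d_{v⃖}·ψ(x^α)]_{c.t.} = α!·δ_{α,β}` ; here `α = β` iff `u` and `v` have the same
letter multiset, and `α! = ∏ᵢ (count of xᵢ in u)!`. -/
theorem ct_deriv_sympWord {n : ℕ} (u v : List (Fin n)) :
    (Dop (FreeMonoid.ofList v) (sympWord u)).coeff (1 : FreeMonoid (Fin n)) =
      if (u : Multiset (Fin n)) = (v : Multiset (Fin n))
      then ((∏ i : Fin n, Nat.factorial (u.count i) : ℕ) : ℂ)
      else 0 := by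
  rw [Dop_coeff, mul_one, sympWord_coeff, List.card_perm_ofFn_get_eq]
  rw [Nat.cast_ite, Nat.cast_zero]
end

section
/- The set {𝒜_Φ : Φ = (Φ₁,…,Φₙ) a generalized set composition of [d] with at most Φₙ empty and all nonempty parts ordered so that min Φ_i < min Φ_{i+1}} is a linear basis of Alt_n^{(d)}, the space of degree-d alternating elements of ℂ⟨x₁,…,xₙ⟩. -/
/-- A generalized set composition `A = (A₁,…,Aₙ)` of `[d]` is encoded by the function
`g : Fin d → Fin n` with `i ∈ A_j ↔ g i = j`; the corresponding word has `i`-th letter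
`x_{g i}`.  The alternating sum is `𝒜_A = Σ_{σ∈S_n} (−1)^{ℓ(σ)} σ∘A`. -/
noncomputable def AltSum (n d : ℕ) (g : Fin d → Fin n) : NCPoly n :=
  ∑ σ : Equiv.Perm (Fin n),
    ((Equiv.Perm.sign σ : ℤ) : ℂ) •
      MonoidAlgebra.single (FreeMonoid.ofList (List.ofFn fun i => σ (g i))) (1 : ℂ)

/-- The generalized set composition encoded by `g : Fin d → Fin n` is "ordered":
all parts except possibly the last one are nonempty, and nonempty parts are listed
in increasing order of their minima (every part with a smaller index has an occurrence
strictly before all occurrences of any nonempty part with larger index). -/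
def OrderedGSC {n d : ℕ} (g : Fin d → Fin n) : Prop :=
  (∀ j : Fin n, (j : ℕ) + 1 < n → ∃ i, g i = j) ∧
  (∀ j j' : Fin n, j' < j → (∃ i, g i = j) →
    ∃ i', g i' = j' ∧ ∀ i, g i = j → i' < i)

/-- The action of `σ ∈ S_n` on `ℂ⟨x₁,…,xₙ⟩` permuting the variable indices. -/
noncomputable def permAct {n : ℕ} (σ : Equiv.Perm (Fin n)) (f : NCPoly n) : NCPoly n :=
  MonoidAlgebra.ofCoeff (Finsupp.mapDomain (⇑(FreeMonoid.map ⇑σ)) f.coeff)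

open Function Equiv Equiv.Perm

lemma Equiv.Perm.intCast_sign_mul_self {α R : Type*} [Fintype α] [DecidableEq α] [Ring R]
    (σ : Perm α) : ((sign σ : ℤ) : R) * ((sign σ : ℤ) : R) = 1 := by
  simp [← Int.cast_mul, ← Units.val_mul]

section firstOcc

variable {ι α : Type*} [Fintype ι] [LinearOrder ι] [DecidableEq α] {h : ι → α} {c : α} {i : ι}

def firstOcc (h : ι → α) (c : α) : WithTop ι := ({i | h i = c} : Finset ι).min

lemma firstOcc_le (hi : h i = c) : firstOcc h c ≤ i := Finset.min_le (by simpa using hi)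

lemma apply_eq_of_firstOcc_eq (hi : firstOcc h c = i) : h i = c := by
  simpa using Finset.mem_of_min hi

lemma firstOcc_eq_top : firstOcc h c = ⊤ ↔ c ∉ Set.range h := by
  simp [firstOcc, Finset.min_eq_top, Finset.filter_eq_empty_iff]

lemma firstOcc_comp {β : Type*} [DecidableEq β] {f : α → β} (hf : Injective f) (h : ι → α)
    (c : α) : firstOcc (f ∘ h) (f c) = firstOcc h c := by
  simp only [firstOcc, comp_apply, hf.eq_iff]

lemma exists_ne_notMem_range_of_not_injective_firstOcc (hh : ¬ Injective (firstOcc h)) :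
    ∃ c₁ c₂, c₁ ≠ c₂ ∧ c₁ ∉ Set.range h ∧ c₂ ∉ Set.range h := by
  simp only [Injective, not_forall] at hh
  obtain ⟨c₁, c₂, he, hne⟩ := hh
  cases hc : firstOcc h c₁ with
  | top => exact ⟨c₁, c₂, hne, firstOcc_eq_top.1 hc, firstOcc_eq_top.1 (he ▸ hc)⟩
  | coe i =>
    exact absurd ((apply_eq_of_firstOcc_eq hc).symm.trans (apply_eq_of_firstOcc_eq (he ▸ hc))) hne

end firstOcc

section OrderedGSC

variable {n d : ℕ} {g g' h : Fin d → Fin n}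

theorem orderedGSC_iff_strictMono_firstOcc : OrderedGSC g ↔ StrictMono (firstOcc g) := by
  constructor
  · rintro ⟨hne, hord⟩ a b hab
    obtain ⟨i, hi⟩ := hne a (by omega)
    cases hb : firstOcc g b with
    | top => exact (firstOcc_le hi).trans_lt (WithTop.coe_lt_top i)
    | coe j =>
      obtain ⟨i', hi', hlt⟩ := hord b a hab ⟨j, apply_eq_of_firstOcc_eq hb⟩
      exact (firstOcc_le hi').trans_lt (WithTop.coe_lt_coe.2 (hlt j (apply_eq_of_firstOcc_eq hb)))
  · intro hmono
    refine ⟨fun j hj => ?_, fun j j' hlt ⟨i, hi⟩ => ?_⟩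
    · have := hmono (show j < ⟨j + 1, hj⟩ from Fin.lt_def.2 (Nat.lt_succ_self _))
      obtain ⟨i, hi⟩ := WithTop.ne_top_iff_exists.1 (ne_top_of_lt this)
      exact ⟨i, apply_eq_of_firstOcc_eq hi.symm⟩
    · have hlt := hmono hlt
      obtain ⟨i', hi'⟩ := WithTop.ne_top_iff_exists.1 (ne_top_of_lt hlt)
      refine ⟨i', apply_eq_of_firstOcc_eq hi'.symm, fun k hk => ?_⟩
      exact WithTop.coe_lt_coe.1 (hi' ▸ hlt.trans_le (firstOcc_le hk))

lemma firstOcc_perm_comp (σ : Perm (Fin n)) (g : Fin d → Fin n) :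
    firstOcc (σ ∘ g) = firstOcc g ∘ σ.symm := by
  ext1 c
  simpa using firstOcc_comp σ.injective g (σ.symm c)

theorem exists_orderedGSC_perm_comp_eq (hh : Injective (firstOcc h)) :
    ∃ g, OrderedGSC g ∧ ∃ σ : Perm (Fin n), σ ∘ g = h := by
  set σ := Tuple.sort (firstOcc h)
  refine ⟨σ.symm ∘ h, orderedGSC_iff_strictMono_firstOcc.2 ?_, σ, by ext; simp⟩
  rw [firstOcc_perm_comp, Equiv.symm_symm]
  exact (Tuple.monotone_sort _).strictMono_of_injective (hh.comp σ.injective)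

theorem eq_of_perm_comp_eq (hg : OrderedGSC g) (hg' : OrderedGSC g') {σ τ : Perm (Fin n)}
    (he : σ ∘ g = τ ∘ g') : g = g' ∧ σ = τ := by
  set π := τ⁻¹ * σ
  have hπ : π ∘ g = g' := by
    ext1 i
    simpa [π] using congr_arg ⇑(τ⁻¹) (congrFun he i)
  have hmono : StrictMono π := fun a b hab => by
    have := orderedGSC_iff_strictMono_firstOcc.1 hg hab
    rwa [← firstOcc_comp π.injective g, ← firstOcc_comp π.injective g b, hπ,
      (orderedGSC_iff_strictMono_firstOcc.1 hg').lt_iff_lt] at this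
  have hπ1 : π = 1 := Equiv.ext fun x => hmono.apply_eq
  exact ⟨by rw [← hπ, hπ1]; rfl, (inv_mul_eq_one.1 hπ1).symm⟩

end OrderedGSC

lemma FreeMonoid.map_injective {α β : Type*} {f : α → β} (hf : Injective f) :
    Injective (FreeMonoid.map f) := fun _ _ he =>
  FreeMonoid.toList.injective (List.map_injective_iff.2 hf (congrArg FreeMonoid.toList he))

namespace NCPoly

variable {n d : ℕ}

section word

variable {α β : Type*}

def word (h : Fin d → α) : FreeMonoid α := FreeMonoid.ofList (List.ofFn h)

lemma word_injective : Injective (word : (Fin d → α) → FreeMonoid α) :=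
  FreeMonoid.ofList.injective.comp List.ofFn_injective

lemma length_word (h : Fin d → α) : (word h).length = d := List.length_ofFn

lemma exists_word_eq {w : FreeMonoid α} (hw : w.length = d) : ∃ h : Fin d → α, word h = w := by
  subst hw
  exact ⟨fun i => w.toList[i], (congrArg FreeMonoid.ofList List.ofFn_getElem).trans w.ofList_toList⟩

lemma map_word (f : α → β) (h : Fin d → α) : FreeMonoid.map f (word h) = word (f ∘ h) :=
  congrArg FreeMonoid.ofList List.map_ofFn

end word

lemma altSum_eq (g : Fin d → Fin n) :
    AltSum n d g = ∑ σ : Perm (Fin n),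
      ((sign σ : ℤ) : ℂ) • MonoidAlgebra.single (word (σ ∘ g)) 1 := rfl

lemma coeff_altSum_word (g h : Fin d → Fin n) :
    (AltSum n d g).coeff (word h) =
      ∑ σ : Perm (Fin n), if σ ∘ g = h then ((sign σ : ℤ) : ℂ) else 0 := by
  classical
  simp only [altSum_eq, MonoidAlgebra.coeff_sum, MonoidAlgebra.coeff_smul,
    MonoidAlgebra.coeff_single, Finsupp.finsetSum_apply, Finsupp.smul_apply,
    Finsupp.single_apply, word_injective.eq_iff]
  simp

lemma permAct_eq_mapDomainLinearMap (σ : Perm (Fin n)) (f : NCPoly n) :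
    permAct σ f = MonoidAlgebra.mapDomainLinearMap ℂ ℂ (FreeMonoid.map σ) f := rfl

lemma coeff_permAct_word (σ : Perm (Fin n)) (f : NCPoly n) (h : Fin d → Fin n) :
    (permAct σ f).coeff (word (σ ∘ h)) = f.coeff (word h) := by
  rw [← map_word]
  exact Finsupp.mapDomain_apply (FreeMonoid.map_injective σ.injective) _ _

noncomputable def altSubmodule (n d : ℕ) : Submodule ℂ (NCPoly n) :=
  MonoidAlgebra.supported ℂ ℂ {w | w.length = d} ⊓
    ⨅ σ : Perm (Fin n), LinearMap.ker
      (MonoidAlgebra.mapDomainLinearMap ℂ ℂ (FreeMonoid.map σ) - ((sign σ : ℤ) : ℂ) • LinearMap.id)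

lemma mem_altSubmodule {f : NCPoly n} :
    f ∈ altSubmodule n d ↔ (∀ w ∈ f.coeff.support, FreeMonoid.length w = d) ∧
      ∀ σ : Perm (Fin n), permAct σ f = ((sign σ : ℤ) : ℂ) • f := by
  simp [altSubmodule, MonoidAlgebra.mem_supported, Set.subset_def, sub_eq_zero,
    permAct_eq_mapDomainLinearMap]

lemma permAct_altSum (τ : Perm (Fin n)) (g : Fin d → Fin n) :
    permAct τ (AltSum n d g) = ((sign τ : ℤ) : ℂ) • AltSum n d g := by
  rw [permAct_eq_mapDomainLinearMap, altSum_eq, map_sum, Finset.smul_sum]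
  refine Fintype.sum_equiv (Equiv.mulLeft τ) _ _ fun σ => ?_
  simp only [map_smul, MonoidAlgebra.mapDomainLinearMap_single, map_word, smul_smul,
    coe_mulLeft, Perm.coe_mul]
  rw [Perm.sign_mul, Units.val_mul, Int.cast_mul, ← mul_assoc, intCast_sign_mul_self, one_mul]
  rfl

lemma single_word_mem_supported (h : Fin d → Fin n) :
    MonoidAlgebra.single (word h) (1 : ℂ) ∈ MonoidAlgebra.supported ℂ ℂ {w | w.length = d} := by
  rw [MonoidAlgebra.supported_eq_span_single]
  exact Submodule.subset_span ⟨_, length_word h, rfl⟩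

lemma altSum_mem_altSubmodule (g : Fin d → Fin n) : AltSum n d g ∈ altSubmodule n d := by
  refine ⟨?_, Submodule.mem_iInf _ |>.2 fun τ => ?_⟩
  · exact Submodule.sum_mem _ fun σ _ => Submodule.smul_mem _ _ (single_word_mem_supported _)
  · simp [← permAct_eq_mapDomainLinearMap, permAct_altSum]

variable {f : NCPoly n}

lemma coeff_eq_zero_of_length_ne (hf : f ∈ altSubmodule n d) {w : FreeMonoid (Fin n)}
    (hw : w.length ≠ d) : f.coeff w = 0 :=
  MonoidAlgebra.mem_supported'.1 hf.1 w hw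

lemma coeff_word_perm_comp (hf : f ∈ altSubmodule n d) (σ : Perm (Fin n)) (h : Fin d → Fin n) :
    f.coeff (word (σ ∘ h)) = ((sign σ : ℤ) : ℂ) * f.coeff (word h) := by
  have := coeff_permAct_word σ f h
  rw [(mem_altSubmodule.1 hf).2 σ] at this
  rw [← this, MonoidAlgebra.coeff_smul, Finsupp.smul_apply, smul_eq_mul, ← mul_assoc,
    intCast_sign_mul_self, one_mul]

lemma coeff_word_eq_zero_of_not_injective (hf : f ∈ altSubmodule n d) {h : Fin d → Fin n}
    (hh : ¬ Injective (firstOcc h)) : f.coeff (word h) = 0 := by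
  obtain ⟨c₁, c₂, hne, h₁, h₂⟩ := exists_ne_notMem_range_of_not_injective_firstOcc hh
  have hfix : swap c₁ c₂ ∘ h = h :=
    funext fun i => swap_apply_of_ne_of_ne (fun e => h₁ ⟨i, e⟩) (fun e => h₂ ⟨i, e⟩)
  have := coeff_word_perm_comp hf (swap c₁ c₂) h
  rw [hfix, sign_swap hne] at this
  push_cast at this
  linear_combination this / 2

theorem eq_zero_of_coeff_word_orderedGSC (hf : f ∈ altSubmodule n d)
    (h0 : ∀ g : {g : Fin d → Fin n // OrderedGSC g}, f.coeff (word g.1) = 0) : f = 0 := by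
  ext w
  by_cases hw : w.length = d
  · obtain ⟨h, rfl⟩ := exists_word_eq hw
    by_cases hh : Injective (firstOcc h)
    · obtain ⟨g, hg, σ, rfl⟩ := exists_orderedGSC_perm_comp_eq hh
      simp [coeff_word_perm_comp hf, h0 ⟨g, hg⟩]
    · exact coeff_word_eq_zero_of_not_injective hf hh
  · exact coeff_eq_zero_of_length_ne hf hw

lemma coeff_altSum_word_of_orderedGSC (g g' : {g : Fin d → Fin n // OrderedGSC g}) :
    (AltSum n d g).coeff (word g'.1) = if g = g' then 1 else 0 := by
  have key (σ : Perm (Fin n)) : σ ∘ g.1 = g' ↔ g = g' ∧ σ = 1 := by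
    rw [Subtype.ext_iff]
    exact ⟨fun he => eq_of_perm_comp_eq g.2 g'.2 (he.trans (g'.1.id_comp).symm),
      by rintro ⟨he, rfl⟩; exact he⟩
  simp_rw [coeff_altSum_word, key, ite_and]
  split_ifs <;> simp

theorem linearIndependent_altSum :
    LinearIndependent ℂ (fun g : {g : Fin d → Fin n // OrderedGSC g} => AltSum n d g.1) := by
  classical
  refine linearIndependent_iff'.2 fun s c hsum g hgs => ?_
  have := congrArg (fun F : NCPoly n => F.coeff (word g.1)) hsum
  simpa [MonoidAlgebra.coeff_sum, coeff_altSum_word_of_orderedGSC, hgs] using this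

theorem span_altSum :
    Submodule.span ℂ (Set.range fun g : {g : Fin d → Fin n // OrderedGSC g} => AltSum n d g.1) =
      altSubmodule n d := by
  classical
  refine le_antisymm (Submodule.span_le.2 (Set.range_subset_iff.2 fun g =>
    altSum_mem_altSubmodule g.1)) fun f hf => ?_
  set F := ∑ g : {g : Fin d → Fin n // OrderedGSC g}, f.coeff (word g.1) • AltSum n d g.1
  have hF : F ∈ altSubmodule n d :=
    Submodule.sum_mem _ fun g _ => Submodule.smul_mem _ _ (altSum_mem_altSubmodule _)
  have hfF : f - F = 0 := eq_zero_of_coeff_word_orderedGSC (sub_mem hf hF) fun g => by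
    simp [F, MonoidAlgebra.coeff_sum, coeff_altSum_word_of_orderedGSC]
  rw [sub_eq_zero.1 hfF]
  exact Submodule.sum_mem _ fun g _ => Submodule.smul_mem _ _ (Submodule.subset_span ⟨g, rfl⟩)

end NCPoly

/-- The `𝒜_Φ`, for `Φ` an ordered generalized set composition of `[d]`
with at most the last part empty and nonempty parts ordered by increasing minima, form a
linear basis of `Alt_n^{(d)}`, the space of degree-`d` alternating elements of
`ℂ⟨x₁,…,xₙ⟩`. -/
theorem altSum_basis_of_alt (n d : ℕ) :
    LinearIndependent ℂ
      (fun g : {g : Fin d → Fin n // OrderedGSC g} => AltSum n d g.1) ∧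
    (Submodule.span ℂ
        (Set.range fun g : {g : Fin d → Fin n // OrderedGSC g} => AltSum n d g.1) :
        Set (NCPoly n)) =
      {f : NCPoly n |
        (∀ w ∈ f.coeff.support, FreeMonoid.length w = d) ∧
        ∀ σ : Equiv.Perm (Fin n), permAct σ f = ((Equiv.Perm.sign σ : ℤ) : ℂ) • f} := by
  refine ⟨NCPoly.linearIndependent_altSum, ?_⟩
  rw [NCPoly.span_altSum]
  exact Set.ext fun f => NCPoly.mem_altSubmodule
end

section
/- In ℂ⟨x₁,x₂⟩, the ideal I₂ generated by the noncommutative symmetric functions M_Φ(x₁,x₂) (Φ nonempty set partitions) contains every homogeneous element of degree ≥ 2; equivalently I₂ together with the span of {1, x₁ − x₂, x₁ + x₂} exhausts ℂ⟨x₁,x₂⟩, and the quotient ℂ⟨x₁,x₂⟩/I₂ has dimension 2. -/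
open scoped BigOperators

/-- The abelianization map `χ : ℂ⟨x₁,…,xₙ⟩ → ℂ[x₁,…,xₙ]`. -/
noncomputable def chiMap (n : ℕ) : NCPoly n →ₐ[ℂ] MvPolynomial (Fin n) ℂ :=
  MonoidAlgebra.lift ℂ (MvPolynomial (Fin n) ℂ) (FreeMonoid (Fin n))
    (FreeMonoid.lift fun i => MvPolynomial.X i)

open Classical in
/-- The monomial symmetric function in noncommuting variables `M_Φ(x₁,…,xₙ)`, where the
set partition `Φ` of `[k]` is encoded as an equivalence relation (a `Setoid`) on `Fin k`:
the sum of all words `w` of length `k` whose fibres give the set partition `Φ`, i.e.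
`w_i = w_j ↔ i ∼ j`. -/
noncomputable def Msym (n k : ℕ) (r : Setoid (Fin k)) : NCPoly n :=
  ∑ f : Fin k → Fin n,
    if (∀ i j, f i = f j ↔ r.r i j)
    then MonoidAlgebra.single (FreeMonoid.ofList (List.ofFn f)) (1 : ℂ)
    else 0

/-- The two-sided ideal generated by the `M_Φ(x₁,…,xₙ)` over all nonempty set
partitions `Φ ⊢ [k]`, `k > 0`. -/
noncomputable def Isym (n : ℕ) : TwoSidedIdeal (NCPoly n) :=
  TwoSidedIdeal.span {x | ∃ k : ℕ, 0 < k ∧ ∃ r : Setoid (Fin k), x = Msym n k r}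

/-- The noncommutative harmonics `Har_n = I_n^⊥`. -/
noncomputable def HarSet (n : ℕ) : Set (NCPoly n) :=
  {P | ∀ f ∈ Isym n, wpair f P = 0}

/-! The generators `M_{1} = x₁ + x₂`, `M_{1.2} = x₁x₂ + x₂x₁` and `M_{12} = x₁² + x₂²` lie in `I₂`,
and `x₁(x₁ + x₂) + (x₁ + x₂)x₁ - (x₁x₂ + x₂x₁) = 2x₁²`; so all four quadratic words, hence all
words of length `≥ 2`, lie in `I₂`, and modulo `I₂` everything is a combination of `1` and `x₁`.
Conversely, the algebra map to the dual numbers `x₁ ↦ ε`, `x₂ ↦ -ε` kills every `M_Φ` (those of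
degree `≥ 2` because `ε² = 0`), so `I₂` is exactly its kernel and the quotient is `ℂ[ε]`. -/
open DualNumber

lemma FreeMonoid.exists_eq_of_mul_of_mul {α : Type*} {w : FreeMonoid α}
    (hw : 2 ≤ w.length) : ∃ a b t, w = FreeMonoid.of a * FreeMonoid.of b * t := by
  rcases hl : FreeMonoid.toList w with _ | ⟨a, _ | ⟨b, t⟩⟩
  · simp [FreeMonoid.length, hl] at hw
  · simp [FreeMonoid.length, hl] at hw
  · exact ⟨a, b, FreeMonoid.ofList t, congrArg FreeMonoid.ofList hl⟩

lemma TwoSidedIdeal.algebra_smul_mem {R A : Type*} [CommSemiring R] [Ring A] [Algebra R A]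
    (I : TwoSidedIdeal A) (c : R) {x : A} (hx : x ∈ I) : c • x ∈ I := by
  rw [Algebra.smul_def]
  exact I.mul_mem_left _ _ hx

namespace NCPoly

noncomputable abbrev X {n : ℕ} (i : Fin n) : NCPoly n := MonoidAlgebra.single (FreeMonoid.of i) 1

lemma single_eq_X_mul_X_mul {n : ℕ} {w : FreeMonoid (Fin n)} (hw : 2 ≤ w.length) (c : ℂ) :
    ∃ a b t, MonoidAlgebra.single w c = X a * X b * MonoidAlgebra.single t c := by
  obtain ⟨a, b, t, rfl⟩ := FreeMonoid.exists_eq_of_mul_of_mul hw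
  exact ⟨a, b, t, by simp only [X, MonoidAlgebra.single_mul_single, one_mul]⟩

variable {n : ℕ} {I : TwoSidedIdeal (NCPoly n)}

lemma single_mem_of_X_mul_X_mem (hI : ∀ i j, X i * X j ∈ I) {w : FreeMonoid (Fin n)}
    (hw : 2 ≤ w.length) (c : ℂ) : MonoidAlgebra.single w c ∈ I := by
  obtain ⟨a, b, t, h⟩ := single_eq_X_mul_X_mul hw c
  rw [h]
  exact I.mul_mem_right _ _ (hI a b)

lemma mem_of_X_mul_X_mem (hI : ∀ i j, X i * X j ∈ I) {f : NCPoly n}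
    (hf : ∀ w ∈ f.coeff.support, 2 ≤ w.length) : f ∈ I := by
  rw [← MonoidAlgebra.sum_coeff_single f]
  exact I.finsetSum_mem _ _ fun w hw => single_mem_of_X_mul_X_mem hI (hf w hw) _

lemma Msym_mem_of_X_mul_X_mem (hI : ∀ i j, X i * X j ∈ I) {k : ℕ} (hk : 2 ≤ k)
    (r : Setoid (Fin k)) : Msym n k r ∈ I := by
  refine I.finsetSum_mem _ _ fun f _ => ?_
  split
  · exact single_mem_of_X_mul_X_mem hI (by simpa [FreeMonoid.length] using hk) 1
  · exact I.zero_mem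

end NCPoly

open NCPoly

lemma Msym_one (n : ℕ) (r : Setoid (Fin 1)) : Msym n 1 r = ∑ i, X i := by
  rw [Msym, ← (Equiv.funUnique (Fin 1) (Fin n)).symm.sum_comp]
  refine Finset.sum_congr rfl fun i _ => ?_
  rw [if_pos fun a b => by simp [Subsingleton.elim a b]]
  rfl

lemma Msym_two_top : Msym 2 2 ⊤ = X 0 * X 0 + X 1 * X 1 := by
  rw [Msym, ← (piFinTwoEquiv fun _ => Fin 2).symm.sum_comp, Fintype.sum_prod_type]
  simp only [Fin.sum_univ_two, piFinTwoEquiv_symm_apply]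
  have ht : ∀ i j : Fin 2, (⊤ : Setoid (Fin 2)).r i j ↔ True := fun _ _ => Iff.rfl
  simp only [ht, iff_true, Fin.forall_fin_two]
  norm_num [List.ofFn_succ, MonoidAlgebra.single_mul_single]

lemma Msym_two_bot : Msym 2 2 ⊥ = X 0 * X 1 + X 1 * X 0 := by
  rw [Msym, ← (piFinTwoEquiv fun _ => Fin 2).symm.sum_comp, Fintype.sum_prod_type]
  simp only [Fin.sum_univ_two, piFinTwoEquiv_symm_apply]
  have hb : ∀ i j : Fin 2, (⊥ : Setoid (Fin 2)).r i j ↔ i = j := fun _ _ => Iff.rfl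
  simp only [hb, Fin.forall_fin_two]
  norm_num [List.ofFn_succ, MonoidAlgebra.single_mul_single]

lemma Msym_mem_Isym (n : ℕ) {k : ℕ} (hk : 0 < k) (r : Setoid (Fin k)) : Msym n k r ∈ Isym n :=
  TwoSidedIdeal.subset_span ⟨k, hk, r, rfl⟩

lemma X_zero_add_X_one_mem_Isym_two : X 0 + X 1 ∈ Isym 2 := by
  simpa [Msym_one, Fin.sum_univ_two] using Msym_mem_Isym 2 one_pos ⊥

lemma X_mul_X_mem_Isym_two (i j : Fin 2) : X i * X j ∈ Isym 2 := by
  have hs := X_zero_add_X_one_mem_Isym_two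
  have hleft := (Isym 2).mul_mem_left (X 0) _ hs
  have hright := (Isym 2).mul_mem_right _ (X 0) hs
  have hmixed : X 0 * X 1 + X 1 * X 0 ∈ Isym 2 := Msym_two_bot ▸ Msym_mem_Isym 2 two_pos ⊥
  have hsquares : X 0 * X 0 + X 1 * X 1 ∈ Isym 2 := Msym_two_top ▸ Msym_mem_Isym 2 two_pos ⊤
  have h00 : X 0 * X 0 ∈ Isym 2 := by
    convert (Isym 2).algebra_smul_mem (2 : ℂ)⁻¹
      ((Isym 2).sub_mem ((Isym 2).add_mem hleft hright) hmixed) using 1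
    simp only [mul_add, add_mul]
    module
  fin_cases i <;> fin_cases j
  · exact h00
  · simpa [mul_add] using (Isym 2).sub_mem hleft h00
  · simpa [add_mul] using (Isym 2).sub_mem hright h00
  · simpa using (Isym 2).sub_mem hsquares h00

lemma exists_mem_Isym_two_add_smul_one_add_smul_X (f : NCPoly 2) :
    ∃ g ∈ Isym 2, ∃ a b : ℂ, f = g + a • 1 + b • X 0 := by
  induction f using MonoidAlgebra.induction_linear with
  | zero => exact ⟨0, (Isym 2).zero_mem, 0, 0, by simp⟩
  | add f f' hf hf' =>
    obtain ⟨g, hg, a, b, rfl⟩ := hf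
    obtain ⟨g', hg', a', b', rfl⟩ := hf'
    exact ⟨g + g', (Isym 2).add_mem hg hg', a + a', b + b', by module⟩
  | single w c =>
    rcases Nat.lt_or_ge w.length 2 with hw | hw
    · interval_cases hl : w.length
      · rw [FreeMonoid.length_eq_zero] at hl
        exact ⟨0, (Isym 2).zero_mem, c, 0, by simp [hl, MonoidAlgebra.one_def]⟩
      · obtain ⟨i, rfl⟩ := FreeMonoid.length_eq_one.mp hl
        have hX : MonoidAlgebra.single (FreeMonoid.of i) c = c • X i := by simp
        rw [hX]
        match i with
        | 0 => exact ⟨0, (Isym 2).zero_mem, 0, c, by simp⟩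
        | 1 =>
          exact ⟨c • (X 0 + X 1), (Isym 2).algebra_smul_mem c X_zero_add_X_one_mem_Isym_two,
            0, -c, by module⟩
    · exact ⟨_, single_mem_of_X_mul_X_mem X_mul_X_mem_Isym_two hw c, 0, 0, by simp⟩

noncomputable def dualHom : NCPoly 2 →ₐ[ℂ] ℂ[ε] :=
  MonoidAlgebra.lift ℂ ℂ[ε] (FreeMonoid (Fin 2)) (FreeMonoid.lift ![ε, -ε])

@[simp] lemma dualHom_X_zero : dualHom (X 0) = ε := by
  simp [dualHom]

@[simp] lemma dualHom_X_one : dualHom (X 1) = -ε := by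
  simp [dualHom]

lemma X_mul_X_mem_ker_dualHom (i j : Fin 2) : X i * X j ∈ TwoSidedIdeal.ker dualHom := by
  rw [TwoSidedIdeal.mem_ker, map_mul]
  fin_cases i <;> fin_cases j <;> simp

lemma Isym_two_le_ker_dualHom : Isym 2 ≤ TwoSidedIdeal.ker dualHom := by
  refine TwoSidedIdeal.span_le.mpr ?_
  rintro _ ⟨k, hk, r, rfl⟩
  rcases Nat.lt_or_ge k 2 with hk2 | hk2
  · obtain rfl : k = 1 := by omega
    simp [TwoSidedIdeal.mem_ker, Msym_one, Fin.sum_univ_two]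
  · exact Msym_mem_of_X_mul_X_mem X_mul_X_mem_ker_dualHom hk2 r

lemma mem_Isym_two_iff (f : NCPoly 2) : f ∈ Isym 2 ↔ dualHom f = 0 := by
  refine ⟨fun hf => (TwoSidedIdeal.mem_ker _).mp (Isym_two_le_ker_dualHom hf), fun hf => ?_⟩
  obtain ⟨g, hg, a, b, rfl⟩ := exists_mem_Isym_two_add_smul_one_add_smul_X f
  have hfg : dualHom g = 0 := (TwoSidedIdeal.mem_ker _).mp (Isym_two_le_ker_dualHom hg)
  simp only [map_add, map_smul, map_one, dualHom_X_zero, hfg, zero_add] at hf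
  have ha : a = 0 := by simpa using congrArg TrivSqZeroExt.fst hf
  have hb : b = 0 := by simpa using congrArg TrivSqZeroExt.snd hf
  simpa [ha, hb] using hg

lemma dualHom_surjective : Function.Surjective dualHom := by
  intro x
  refine ⟨x.fst • 1 + x.snd • X 0, ?_⟩
  rw [map_add, map_smul, map_smul, map_one, dualHom_X_zero]
  ext <;> simp

lemma span_Isym_two_eq_ker :
    Submodule.span ℂ (Isym 2 : Set (NCPoly 2)) = LinearMap.ker dualHom.toLinearMap := by
  refine le_antisymm (Submodule.span_le.mpr fun f hf => ?_) fun f hf => Submodule.subset_span ?_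
  · exact (mem_Isym_two_iff f).mp hf
  · exact (mem_Isym_two_iff f).mpr hf

lemma finrank_quotient_span_Isym_two :
    Module.finrank ℂ (NCPoly 2 ⧸ Submodule.span ℂ (Isym 2 : Set (NCPoly 2))) = 2 := by
  rw [span_Isym_two_eq_ker,
    (LinearMap.quotKerEquivOfSurjective dualHom.toLinearMap dualHom_surjective).finrank_eq]
  show Module.finrank ℂ (ℂ × ℂ) = 2
  simp

/-- The ideal `I₂ ⊆ ℂ⟨x₁,x₂⟩` generated by the `M_Φ(x₁,x₂)` contains
every homogeneous element of degree `≥ 2`; together with the span of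
`{1, x₁ − x₂, x₁ + x₂}` it exhausts `ℂ⟨x₁,x₂⟩`; and the quotient `ℂ⟨x₁,x₂⟩/I₂` has
dimension `2` as a `ℂ`-vector space. -/
theorem Isym_two :
    (∀ (f : NCPoly 2) (d : ℕ), 2 ≤ d →
        (∀ w ∈ f.coeff.support, FreeMonoid.length w = d) → f ∈ Isym 2) ∧
    (∀ f : NCPoly 2, ∃ g ∈ Isym 2, ∃ c₀ c₁ c₂ : ℂ,
        f = g + c₀ • (1 : NCPoly 2) +
          c₁ • (MonoidAlgebra.single (FreeMonoid.ofList [(0 : Fin 2)]) (1 : ℂ) -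
                MonoidAlgebra.single (FreeMonoid.ofList [(1 : Fin 2)]) (1 : ℂ)) +
          c₂ • (MonoidAlgebra.single (FreeMonoid.ofList [(0 : Fin 2)]) (1 : ℂ) +
                MonoidAlgebra.single (FreeMonoid.ofList [(1 : Fin 2)]) (1 : ℂ))) ∧
    Module.finrank ℂ
      (NCPoly 2 ⧸ Submodule.span ℂ ((Isym 2 : Set (NCPoly 2)))) = 2 := by
  refine ⟨fun f d hd hf => ?_, fun f => ?_, finrank_quotient_span_Isym_two⟩
  · exact mem_of_X_mul_X_mem X_mul_X_mem_Isym_two fun w hw => hf w hw ▸ hd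
  · obtain ⟨g, hg, a, b, rfl⟩ := exists_mem_Isym_two_add_smul_one_add_smul_X f
    refine ⟨g, hg, a, b / 2, b / 2, ?_⟩
    change _ = _ + _ + _ • (X 0 - X 1) + _ • (X 0 + X 1)
    module
end
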